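/- arXiv:2605.25470 — 6 statements merged into one kernel-verified Lean document; each statement's English description precedes it below -/
import Mathlib

section
/- Let b, b' ∈ M_{m×n}(K) have the same rank. Then the Lie algebras (M_{n×m}(K), ⟦·,·⟧_b) and (M_{n×m}(K), ⟦·,·⟧_{b'}) are isomorphic, where ⟦x,y⟧_b = xby − ybx. -/
open Submodule LinearMap Module

/-- Two linear maps between finite-dimensional vector spaces with equal rank differ by
automorphisms of source and target. -/
theorem exists_equiv_comp_of_finrank_range_eq {K V W : Type*} [Field K]
    [AddCommGroup V] [Module K V] [AddCommGroup W] [Module K W]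
    [FiniteDimensional K V] [FiniteDimensional K W] (f g : V →ₗ[K] W)
    (h : finrank K (LinearMap.range f) = finrank K (LinearMap.range g)) :
    ∃ (u : V ≃ₗ[K] V) (w : W ≃ₗ[K] W), ∀ x, g (u x) = w (f x) := by
  obtain ⟨q, hq⟩ := Submodule.exists_isCompl (LinearMap.ker f)
  obtain ⟨q', hq'⟩ := Submodule.exists_isCompl (LinearMap.ker g)
  obtain ⟨s, hs⟩ := Submodule.exists_isCompl (LinearMap.range f)
  obtain ⟨s', hs'⟩ := Submodule.exists_isCompl (LinearMap.range g)
  let fq : q ≃ₗ[K] LinearMap.range f :=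
    (Submodule.quotientEquivOfIsCompl _ q hq).symm.trans f.quotKerEquivRange
  let gq : q' ≃ₗ[K] LinearMap.range g :=
    (Submodule.quotientEquivOfIsCompl _ q' hq').symm.trans g.quotKerEquivRange
  have hfq : ∀ x : q, (fq x : W) = f x := fun x => by
    simp only [fq, LinearEquiv.trans_apply, Submodule.quotientEquivOfIsCompl_symm_apply,
      LinearMap.quotKerEquivRange_apply_mk]
  have hgq : ∀ x : q', (gq x : W) = g x := fun x => by
    simp only [gq, LinearEquiv.trans_apply, Submodule.quotientEquivOfIsCompl_symm_apply,
      LinearMap.quotKerEquivRange_apply_mk]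
  have hker : finrank K (LinearMap.ker f) = finrank K (LinearMap.ker g) := by
    have h1 := f.finrank_range_add_finrank_ker
    have h2 := g.finrank_range_add_finrank_ker
    omega
  have hcompl : finrank K s = finrank K s' := by
    have h1 := Submodule.finrank_add_eq_of_isCompl hs
    have h2 := Submodule.finrank_add_eq_of_isCompl hs'
    omega
  let κ : (LinearMap.ker f) ≃ₗ[K] (LinearMap.ker g) := LinearEquiv.ofFinrankEq _ _ hker
  let β : (LinearMap.range f) ≃ₗ[K] (LinearMap.range g) := LinearEquiv.ofFinrankEq _ _ h
  let σ : s ≃ₗ[K] s' := LinearEquiv.ofFinrankEq _ _ hcompl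
  let u : V ≃ₗ[K] V :=
    (Submodule.prodEquivOfIsCompl _ q hq).symm.trans
      ((κ.prodCongr (fq.trans (β.trans gq.symm))).trans (Submodule.prodEquivOfIsCompl _ q' hq'))
  let w : W ≃ₗ[K] W :=
    (Submodule.prodEquivOfIsCompl _ s hs).symm.trans
      ((β.prodCongr σ).trans (Submodule.prodEquivOfIsCompl _ s' hs'))
  have hw : ∀ r : LinearMap.range f, w (r : W) = β r := by
    intro r
    simp only [w, LinearEquiv.trans_apply]
    rw [Submodule.prodEquivOfIsCompl_symm_apply_left _ _ hs r]
    simp [Submodule.coe_prodEquivOfIsCompl']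
  refine ⟨u, w, fun x => ?_⟩
  have hx : x ∈ (LinearMap.ker f) ⊔ q := by rw [hq.sup_eq_top]; trivial
  obtain ⟨y, hy, z, hz, rfl⟩ := Submodule.mem_sup.mp hx
  have huy : ∀ a : LinearMap.ker f, u (a : V) = (κ a : V) := by
    intro a
    simp only [u, LinearEquiv.trans_apply]
    rw [Submodule.prodEquivOfIsCompl_symm_apply_left _ _ hq a]
    simp [Submodule.coe_prodEquivOfIsCompl']
  have huz : ∀ a : q, u (a : V) = ((gq.symm (β (fq a))) : V) := by
    intro a
    simp only [u, LinearEquiv.trans_apply]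
    rw [Submodule.prodEquivOfIsCompl_symm_apply_right _ _ hq a]
    simp [Submodule.coe_prodEquivOfIsCompl']
  have hfy : f y = 0 := hy
  rw [map_add, map_add, map_add, map_add, huy ⟨y, hy⟩, huz ⟨z, hz⟩, hfy, map_zero, zero_add]
  have h1 : g ((κ ⟨y, hy⟩ : V)) = 0 := (κ ⟨y, hy⟩).2
  have h2 : g (((gq.symm (β (fq ⟨z, hz⟩))) : q') : V) = (β (fq ⟨z, hz⟩) : W) := by
    rw [← hgq]; rw [LinearEquiv.apply_symm_apply]
  have h3 : w (f z) = (β (fq ⟨z, hz⟩) : W) := by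
    rw [← hfq ⟨z, hz⟩, hw]
  rw [h1, h2, h3, zero_add]

/-- Two matrices of equal rank are equivalent. -/
theorem exists_isUnit_mul_of_rank_eq {K : Type*} [Field K] {m n : ℕ}
    (b b' : Matrix (Fin m) (Fin n) K) (h : b.rank = b'.rank) :
    ∃ (C : Matrix (Fin m) (Fin m) K) (C' : Matrix (Fin m) (Fin m) K)
      (A : Matrix (Fin n) (Fin n) K) (A' : Matrix (Fin n) (Fin n) K),
      C * C' = 1 ∧ C' * C = 1 ∧ A * A' = 1 ∧ A' * A = 1 ∧ b' = C * b * A' := by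
  obtain ⟨u, w, huw⟩ := exists_equiv_comp_of_finrank_range_eq b.mulVecLin b'.mulVecLin h
  refine ⟨LinearMap.toMatrix' (w : ((Fin m) → K) →ₗ[K] (Fin m) → K),
    LinearMap.toMatrix' (w.symm : ((Fin m) → K) →ₗ[K] (Fin m) → K),
    LinearMap.toMatrix' (u : ((Fin n) → K) →ₗ[K] (Fin n) → K),
    LinearMap.toMatrix' (u.symm : ((Fin n) → K) →ₗ[K] (Fin n) → K), ?_, ?_, ?_, ?_, ?_⟩
  · rw [← LinearMap.toMatrix'_comp]
    simp [LinearEquiv.comp_coe]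
  · rw [← LinearMap.toMatrix'_comp]
    simp [LinearEquiv.comp_coe]
  · rw [← LinearMap.toMatrix'_comp]
    simp [LinearEquiv.comp_coe]
  · rw [← LinearMap.toMatrix'_comp]
    simp [LinearEquiv.comp_coe]
  · have hc : b'.mulVecLin ∘ₗ (u : ((Fin n) → K) →ₗ[K] (Fin n) → K)
        = (w : ((Fin m) → K) →ₗ[K] (Fin m) → K) ∘ₗ b.mulVecLin := LinearMap.ext huw
    have hm : b' * LinearMap.toMatrix' (u : ((Fin n) → K) →ₗ[K] (Fin n) → K)
        = LinearMap.toMatrix' (w : ((Fin m) → K) →ₗ[K] (Fin m) → K) * b := by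
      have := congrArg LinearMap.toMatrix' hc
      rwa [LinearMap.toMatrix'_comp, LinearMap.toMatrix'_comp, ← Matrix.toLin'_apply',
        ← Matrix.toLin'_apply', LinearMap.toMatrix'_toLin', LinearMap.toMatrix'_toLin'] at this
    have hAA' : LinearMap.toMatrix' (u : ((Fin n) → K) →ₗ[K] (Fin n) → K)
        * LinearMap.toMatrix' (u.symm : ((Fin n) → K) →ₗ[K] (Fin n) → K) = 1 := by
      rw [← LinearMap.toMatrix'_comp]
      simp [LinearEquiv.comp_coe]
    calc b' = b' * (1 : Matrix (Fin n) (Fin n) K) := by rw [Matrix.mul_one]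
      _ = b' * (LinearMap.toMatrix' (u : ((Fin n) → K) →ₗ[K] (Fin n) → K)
            * LinearMap.toMatrix' (u.symm : ((Fin n) → K) →ₗ[K] (Fin n) → K)) := by rw [hAA']
      _ = (b' * LinearMap.toMatrix' (u : ((Fin n) → K) →ₗ[K] (Fin n) → K))
            * LinearMap.toMatrix' (u.symm : ((Fin n) → K) →ₗ[K] (Fin n) → K) := by
          rw [Matrix.mul_assoc]
      _ = LinearMap.toMatrix' (w : ((Fin m) → K) →ₗ[K] (Fin m) → K) * b
            * LinearMap.toMatrix' (u.symm : ((Fin n) → K) →ₗ[K] (Fin n) → K) := by rw [hm]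

/-- If `b, b' ∈ M_{m×n}(K)` have the same rank, then the Lie algebras
`(M_{n×m}(K), ⟦·,·⟧_b)` and `(M_{n×m}(K), ⟦·,·⟧_{b'})`, where
`⟦x,y⟧_c = x·c·y − y·c·x`, are isomorphic. -/
theorem derivedBracket_iso_of_rank_eq {K : Type*} [Field K] [CharZero K] {m n : ℕ}
    (b b' : Matrix (Fin m) (Fin n) K) (h : b.rank = b'.rank) :
    ∃ e : Matrix (Fin n) (Fin m) K ≃ₗ[K] Matrix (Fin n) (Fin m) K,
      ∀ x y, e (x * b * y - y * b * x) = e x * b' * e y - e y * b' * e x := by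
  obtain ⟨C, C', A, A', hCC', hC'C, hAA', hA'A, hb'⟩ := exists_isUnit_mul_of_rank_eq b b' h
  have cancelC : ∀ z : Matrix (Fin m) (Fin m) K, C' * (C * z) = z := fun z => by
    rw [← Matrix.mul_assoc, hC'C, Matrix.one_mul]
  have cancelA : ∀ z : Matrix (Fin n) (Fin m) K, A' * (A * z) = z := fun z => by
    rw [← Matrix.mul_assoc, hA'A, Matrix.one_mul]
  have cancelA2 : ∀ z : Matrix (Fin n) (Fin m) K, A * (A' * z) = z := fun z => by
    rw [← Matrix.mul_assoc, hAA', Matrix.one_mul]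
  let e : Matrix (Fin n) (Fin m) K ≃ₗ[K] Matrix (Fin n) (Fin m) K :=
    { toFun := fun x => A * x * C'
      invFun := fun x => A' * x * C
      map_add' := fun x y => by rw [Matrix.mul_add, Matrix.add_mul]
      map_smul' := fun c x => by
        simp [Matrix.mul_smul, Matrix.smul_mul]
      left_inv := fun x => by
        dsimp only
        simp only [Matrix.mul_assoc]
        rw [hC'C, Matrix.mul_one, cancelA]
      right_inv := fun x => by
        dsimp only
        simp only [Matrix.mul_assoc]
        rw [hCC', Matrix.mul_one, cancelA2]
          }
  refine ⟨e, fun x y => ?_⟩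
  show A * (x * b * y - y * b * x) * C'
      = (A * x * C') * b' * (A * y * C') - (A * y * C') * b' * (A * x * C')
  rw [hb']
  rw [Matrix.mul_sub, Matrix.sub_mul]
  simp only [Matrix.mul_assoc, cancelC, cancelA]
end

section
/- Let m, n, r be positive integers with r < m and r < n, and let b ∈ M_{m×n}(K) be the block matrix with I_r in the upper-left corner and zeros elsewhere. Then the center of the Lie algebra (M_{n×m}(K), ⟦x,y⟧ = xby − ybx) equals the set of n×m matrices whose only possibly nonzero block is the lower-right (n−r)×(m−r) block. In particular, the center has dimension (m−r)(n−r). -/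
/-!
Testing the centrality of `w` against the matrix units `E_{ac}` shows that `b w` and `w b` are
the same scalar matrix; as `b` has a zero row, that scalar is `0`. So `w` is central exactly when
`b w = 0` and `w b = 0`, which for the rank-`r` normal form `b` says that the first `r` rows and
the first `r` columns of `w` vanish. Such matrices are the `(n - r) × (m - r)` matrices placed in
the lower-right block.
-/

namespace Matrix

section Sandwich

variable {R l o : Type*} [Fintype l] [Fintype o] [Ring R] {b : Matrix o l R} {w : Matrix l o R}

def IsSandwichCentral (b : Matrix o l R) (w : Matrix l o R) : Prop :=
  ∀ x : Matrix l o R, x * b * w - w * b * x = 0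

theorem isSandwichCentral_of_mul_eq_zero (hbw : b * w = 0) (hwb : w * b = 0) :
    IsSandwichCentral b w := by
  intro x
  rw [Matrix.mul_assoc, hbw, hwb, Matrix.mul_zero, Matrix.zero_mul, sub_zero]

variable [DecidableEq l] [DecidableEq o]

theorem IsSandwichCentral.mul_apply_left (h : IsSandwichCentral b w) (a : l) (c q : o) :
    (b * w) c q = if q = c then (w * b) a a else 0 := by
  have hentry := congrFun₂ (sub_eq_zero.mp (h (single a c 1))) a q
  rw [Matrix.mul_assoc, single_mul_apply_same, one_mul] at hentry
  rw [hentry]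
  split_ifs with hqc
  · rw [hqc, mul_single_apply_same, mul_one]
  · exact mul_single_apply_of_ne _ _ _ _ _ hqc _

theorem IsSandwichCentral.mul_apply_right (h : IsSandwichCentral b w) (p a : l) (c : o) :
    (w * b) p a = if p = a then (b * w) c c else 0 := by
  have hentry := congrFun₂ (sub_eq_zero.mp (h (single a c 1))) p c
  rw [mul_single_apply_same, mul_one, Matrix.mul_assoc] at hentry
  rw [← hentry]
  split_ifs with hpa
  · rw [hpa, single_mul_apply_same, one_mul]
  · exact single_mul_apply_of_ne _ _ _ _ _ hpa _

theorem isSandwichCentral_iff_of_row_eq_zero [Nonempty l] {c₀ : o} (hc₀ : ∀ j, b c₀ j = 0) :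
    IsSandwichCentral b w ↔ b * w = 0 ∧ w * b = 0 := by
  refine ⟨fun h => ?_, fun h => isSandwichCentral_of_mul_eq_zero h.1 h.2⟩
  have hdiag : (b * w) c₀ c₀ = 0 := by simp [mul_apply, hc₀]
  have hwb : w * b = 0 := by
    ext p a
    rw [h.mul_apply_right p a c₀, hdiag, ite_self, zero_apply]
  refine ⟨?_, hwb⟩
  ext c q
  rw [h.mul_apply_left (Classical.arbitrary l) c q, hwb, zero_apply, ite_self, zero_apply]

end Sandwich

def rankNormalForm (R : Type*) [Zero R] [One R] (m n r : ℕ) : Matrix (Fin m) (Fin n) R :=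
  of fun i j => if (i : ℕ) = j ∧ (i : ℕ) < r then 1 else 0

section RankNormalForm

variable {R : Type*} {m n k r : ℕ}

theorem rankNormalForm_apply_of_le [Zero R] [One R] {i : Fin m} (hi : r ≤ i) (j : Fin n) :
    rankNormalForm R m n r i j = 0 :=
  if_neg fun h => (not_lt_of_ge hi) h.2

variable [Semiring R]

theorem rankNormalForm_mul_apply {i : Fin m} {t : Fin n} (hit : (i : ℕ) = t) (ht : (t : ℕ) < r)
    (w : Matrix (Fin n) (Fin k) R) (j : Fin k) : (rankNormalForm R m n r * w) i j = w t j := by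
  rw [mul_apply, Finset.sum_eq_single_of_mem t (Finset.mem_univ _)]
  · simp [rankNormalForm, hit, ht]
  · intro s _ hs
    simp [rankNormalForm, hit, Fin.val_ne_of_ne hs.symm]

theorem mul_rankNormalForm_apply {j : Fin n} {t : Fin m} (hjt : (j : ℕ) = t) (ht : (t : ℕ) < r)
    (w : Matrix (Fin k) (Fin m) R) (i : Fin k) : (w * rankNormalForm R m n r) i j = w i t := by
  rw [mul_apply, Finset.sum_eq_single_of_mem t (Finset.mem_univ _)]
  · simp [rankNormalForm, hjt, ht]
  · intro s _ hs
    simp [rankNormalForm, hjt, Fin.val_ne_of_ne hs]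

theorem rankNormalForm_mul_eq_zero_iff (hrm : r ≤ m) {w : Matrix (Fin n) (Fin k) R} :
    rankNormalForm R m n r * w = 0 ↔ ∀ (i : Fin n) (j : Fin k), (i : ℕ) < r → w i j = 0 := by
  refine ⟨fun h i j hi => ?_, fun hw => ?_⟩
  · rw [← rankNormalForm_mul_apply (i := (⟨i, hi.trans_le hrm⟩ : Fin m)) (t := i) rfl hi w j, h,
      zero_apply]
  · ext i j
    rw [mul_apply, zero_apply]
    refine Finset.sum_eq_zero fun t _ => ?_
    by_cases ht : (i : ℕ) = t ∧ (i : ℕ) < r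
    · rw [hw t j (ht.1 ▸ ht.2), mul_zero]
    · rw [rankNormalForm, of_apply, if_neg ht, zero_mul]

theorem mul_rankNormalForm_eq_zero_iff (hrn : r ≤ n) {w : Matrix (Fin k) (Fin m) R} :
    w * rankNormalForm R m n r = 0 ↔ ∀ (i : Fin k) (j : Fin m), (j : ℕ) < r → w i j = 0 := by
  refine ⟨fun h i j hj => ?_, fun hw => ?_⟩
  · rw [← mul_rankNormalForm_apply (j := (⟨j, hj.trans_le hrn⟩ : Fin n)) (t := j) rfl hj w i, h,
      zero_apply]
  · ext i j
    rw [mul_apply, zero_apply]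
    refine Finset.sum_eq_zero fun t _ => ?_
    by_cases ht : (t : ℕ) = j ∧ (t : ℕ) < r
    · rw [hw i t ht.2, zero_mul]
    · rw [rankNormalForm, of_apply, if_neg ht, mul_zero]

end RankNormalForm

section BlockSubmodule

variable (R : Type*) {l o : Type*}

def blockSubmodule [Semiring R] (s : Set l) (t : Set o) : Submodule R (Matrix l o R) where
  carrier := {w | ∀ i j, i ∉ s ∨ j ∉ t → w i j = 0}
  add_mem' ha hb i j hij := by rw [add_apply, ha i j hij, hb i j hij, add_zero]
  zero_mem' _ _ _ := rfl
  smul_mem' c _ ha i j hij := by rw [smul_apply, ha i j hij, smul_zero]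

open Classical in
noncomputable def blockSubmoduleEquiv [Semiring R] (s : Set l) (t : Set o) :
    blockSubmodule R s t ≃ₗ[R] Matrix s t R where
  toFun w := (w : Matrix l o R).submatrix (↑) (↑)
  map_add' _ _ := rfl
  map_smul' _ _ := rfl
  invFun M := ⟨of fun i j => if h : i ∈ s ∧ j ∈ t then M ⟨i, h.1⟩ ⟨j, h.2⟩ else 0,
    fun _ _ hij => dif_neg (by tauto)⟩
  left_inv w := by
    ext i j
    by_cases h : i ∈ s ∧ j ∈ t
    · simp [h]
    · simp [h, w.2 i j (by tauto)]
  right_inv M := by ext i j; simp [i.2, j.2]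

theorem finrank_blockSubmodule [Ring R] [StrongRankCondition R] (s : Set l) (t : Set o)
    [Fintype s] [Fintype t] :
    Module.finrank R (blockSubmodule R s t) = Fintype.card s * Fintype.card t := by
  rw [(blockSubmoduleEquiv R s t).finrank_eq, Module.finrank_matrix, Module.finrank_self, mul_one]

end BlockSubmodule

end Matrix

open Matrix

theorem center_normal_form_general {K : Type*} [Field K] {m n r : ℕ}
    (hrm : r < m) (hrn : r < n)
    (b : Matrix (Fin m) (Fin n) K)
    (hb : ∀ i j, b i j = if ((i : ℕ) = (j : ℕ) ∧ (i : ℕ) < r) then 1 else 0) :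
    (∀ w : Matrix (Fin n) (Fin m) K,
      (∀ x : Matrix (Fin n) (Fin m) K, x * b * w - w * b * x = 0)
        ↔ ∀ (i : Fin n) (j : Fin m), ((i : ℕ) < r ∨ (j : ℕ) < r) → w i j = 0) ∧
    ∃ Z : Submodule K (Matrix (Fin n) (Fin m) K),
      (Z : Set (Matrix (Fin n) (Fin m) K))
          = {w | ∀ x : Matrix (Fin n) (Fin m) K, x * b * w - w * b * x = 0} ∧
      Module.finrank K Z = (m - r) * (n - r) := by
  obtain rfl : b = rankNormalForm K m n r := ext hb
  have : Nonempty (Fin n) := ⟨⟨r, hrn⟩⟩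
  have hcentral (w : Matrix (Fin n) (Fin m) K) : IsSandwichCentral (rankNormalForm K m n r) w ↔
      ∀ (i : Fin n) (j : Fin m), ((i : ℕ) < r ∨ (j : ℕ) < r) → w i j = 0 := by
    rw [isSandwichCentral_iff_of_row_eq_zero (c₀ := ⟨r, hrm⟩) (rankNormalForm_apply_of_le le_rfl),
      rankNormalForm_mul_eq_zero_iff hrm.le, mul_rankNormalForm_eq_zero_iff hrn.le]
    simp only [or_imp, forall_and]
  refine ⟨hcentral, blockSubmodule K (Set.Ici ⟨r, hrn⟩) (Set.Ici ⟨r, hrm⟩), ?_, ?_⟩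
  · ext w
    refine Iff.trans ?_ (hcentral w).symm
    simp [blockSubmodule, Fin.lt_def]
  · rw [finrank_blockSubmodule]
    simp [Nat.mul_comm]

/-- For `0 < r < m`, `r < n` and `b` the rank-`r` normal form, the center of
`(M_{n×m}(K), ⟦x,y⟧ = xby − ybx)` is exactly the set of matrices whose only
possibly nonzero block is the lower-right `(n−r)×(m−r)` block; in particular
it has dimension `(m−r)(n−r)`. -/
theorem center_normal_form {K : Type*} [Field K] [CharZero K] {m n r : ℕ}
    (hr : 0 < r) (hrm : r < m) (hrn : r < n)
    (b : Matrix (Fin m) (Fin n) K)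
    (hb : ∀ i j, b i j = if ((i : ℕ) = (j : ℕ) ∧ (i : ℕ) < r) then 1 else 0) :
    (∀ w : Matrix (Fin n) (Fin m) K,
      (∀ x : Matrix (Fin n) (Fin m) K, x * b * w - w * b * x = 0)
        ↔ ∀ (i : Fin n) (j : Fin m), ((i : ℕ) < r ∨ (j : ℕ) < r) → w i j = 0) ∧
    ∃ Z : Submodule K (Matrix (Fin n) (Fin m) K),
      (Z : Set (Matrix (Fin n) (Fin m) K))
          = {w | ∀ x : Matrix (Fin n) (Fin m) K, x * b * w - w * b * x = 0} ∧
      Module.finrank K Z = (m - r) * (n - r) :=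
  center_normal_form_general hrm hrn b hb
end

section
/- Let r = m < n (or r = n < m) and let b ∈ M_{m×n}(K) be the normal-form matrix with I_r in the upper-left corner and zeros elsewhere. Then the center of the Lie algebra (M_{n×m}(K), ⟦x,y⟧ = xby − ybx) is zero. -/
/-!
If `w` is central then `x (b w) = (w b) x` for all `x`. When `b` has a zero column `p`, testing
this against the matrix unit `E_{pq}` shows `b w = 0`. When moreover `b` has a right inverse `c`,
centrality at `x = c` gives `w = w b c = c b w = 0`. The normal form `b = (I_m | 0)` with `m < n`
has both properties; the case `n < m` reduces to it by transposition.
-/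

namespace Matrix

variable {R ι κ : Type*} [Fintype ι] [Fintype κ]

def bracketCenter [Semiring R] (b : Matrix κ ι R) : Set (Matrix ι κ R) :=
  {w | ∀ x : Matrix ι κ R, x * b * w = w * b * x}

section Semiring

variable [Semiring R] {b : Matrix κ ι R} {w : Matrix ι κ R}

theorem mul_eq_zero_of_mem_bracketCenter [DecidableEq ι] [DecidableEq κ]
    (hw : w ∈ bracketCenter b) {p : ι} (hp : ∀ t, b t p = 0) : b * w = 0 := by
  ext q j
  have h := congrFun (congrFun (hw (single p q 1)) p) j
  rw [Matrix.mul_assoc, single_mul_apply_same, one_mul] at h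
  rw [h, zero_apply]
  by_cases hqj : j = q
  · rw [hqj, mul_single_apply_same, mul_one, mul_apply]
    simp only [hp, mul_zero, Finset.sum_const_zero]
  · exact mul_single_apply_of_ne _ _ _ _ _ hqj _

theorem eq_zero_of_mem_bracketCenter [DecidableEq ι] [DecidableEq κ]
    (hw : w ∈ bracketCenter b) {p : ι} (hp : ∀ t, b t p = 0) {c : Matrix ι κ R}
    (hc : b * c = 1) : w = 0 :=
  calc w = w * b * c := by rw [Matrix.mul_assoc, hc, Matrix.mul_one]
    _ = c * (b * w) := by rw [← hw c, Matrix.mul_assoc]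
    _ = 0 := by rw [mul_eq_zero_of_mem_bracketCenter hw hp, Matrix.mul_zero]

end Semiring

theorem transpose_mem_bracketCenter [CommSemiring R] {b : Matrix κ ι R} {w : Matrix ι κ R}
    (hw : w ∈ bracketCenter b) : wᵀ ∈ bracketCenter bᵀ := fun x => by
  simpa only [transpose_mul, transpose_transpose, Matrix.mul_assoc] using
    congrArg transpose (hw xᵀ).symm

theorem eq_zero_of_mem_bracketCenter_submatrix_one [Semiring R] [DecidableEq ι] [DecidableEq κ]
    {f : κ → ι} (hf : f.Injective) {p : ι} (hp : p ∉ Set.range f) {w : Matrix ι κ R}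
    (hw : w ∈ bracketCenter ((1 : Matrix ι ι R).submatrix f id)) : w = 0 := by
  refine eq_zero_of_mem_bracketCenter hw (p := p) ?_ (c := (1 : Matrix ι ι R).submatrix id f) ?_
  · intro t
    exact one_apply_ne fun h => hp ⟨t, h⟩
  · rw [← submatrix_mul _ _ _ _ _ Function.bijective_id, Matrix.mul_one, submatrix_one _ hf]

theorem eq_submatrix_one_of_apply_eq_ite [Zero R] [One R] {k l : ℕ} (h : k ≤ l)
    {b : Matrix (Fin k) (Fin l) R} (hb : ∀ i j, b i j = if (i : ℕ) = j then 1 else 0) :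
    b = (1 : Matrix (Fin l) (Fin l) R).submatrix (Fin.castLE h) id := by
  ext i j
  simp [hb, one_apply, Fin.ext_iff]

end Matrix

theorem Fin.mk_notMem_range_castLE {k l : ℕ} (h : k < l) :
    (⟨k, h⟩ : Fin l) ∉ Set.range (Fin.castLE h.le) := by
  simp [Fin.range_castLE]

open Matrix in
theorem center_eq_zero_normal_form_general {K : Type*} [Field K] {m n r : ℕ}
    (hcase : (r = m ∧ m < n) ∨ (r = n ∧ n < m))
    (b : Matrix (Fin m) (Fin n) K)
    (hb : ∀ i j, b i j = if ((i : ℕ) = (j : ℕ) ∧ (i : ℕ) < r) then 1 else 0) :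
    ∀ w : Matrix (Fin n) (Fin m) K,
      (∀ x : Matrix (Fin n) (Fin m) K, x * b * w - w * b * x = 0) → w = 0 := by
  intro w hw
  have hcen : w ∈ bracketCenter b := fun x => sub_eq_zero.mp (hw x)
  rcases hcase with ⟨rfl, hrn⟩ | ⟨rfl, hrm⟩
  · have hb : b = (1 : Matrix (Fin n) (Fin n) K).submatrix (Fin.castLE hrn.le) id :=
      eq_submatrix_one_of_apply_eq_ite _ fun i j => by simp [hb, i.isLt]
    rw [hb] at hcen
    exact eq_zero_of_mem_bracketCenter_submatrix_one (Fin.castLE_injective _)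
      (Fin.mk_notMem_range_castLE hrn) hcen
  · have hb : bᵀ = (1 : Matrix (Fin m) (Fin m) K).submatrix (Fin.castLE hrm.le) id :=
      eq_submatrix_one_of_apply_eq_ite _ fun i j => by
        rw [transpose_apply, hb]
        exact if_congr ⟨fun h => h.1.symm, fun h => ⟨h.symm, h ▸ i.isLt⟩⟩ rfl rfl
    have hcen := transpose_mem_bracketCenter hcen
    rw [hb] at hcen
    exact transpose_eq_zero.mp <| eq_zero_of_mem_bracketCenter_submatrix_one
      (Fin.castLE_injective _) (Fin.mk_notMem_range_castLE hrm) hcen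

/-- If `r = m < n` (or `r = n < m`) and `b` is the rank-`r` normal form,
then the center of `(M_{n×m}(K), ⟦x,y⟧ = xby − ybx)` is zero. -/
theorem center_eq_zero_normal_form {K : Type*} [Field K] [CharZero K] {m n r : ℕ}
    (hcase : (r = m ∧ m < n) ∨ (r = n ∧ n < m))
    (b : Matrix (Fin m) (Fin n) K)
    (hb : ∀ i j, b i j = if ((i : ℕ) = (j : ℕ) ∧ (i : ℕ) < r) then 1 else 0) :
    ∀ w : Matrix (Fin n) (Fin m) K,
      (∀ x : Matrix (Fin n) (Fin m) K, x * b * w - w * b * x = 0) → w = 0 :=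
  center_eq_zero_normal_form_general hcase b hb
end

section
/- Let b ∈ M_{m×n}(K) be of rank 0 or 1. Then the Lie algebra (M_{n×m}(K), ⟦x,y⟧ = xby − ybx) is solvable. -/
/-!
A matrix `b` of rank at most one is a column times a row, `b = u vᵀ`, so `b x b = (vᵀ x u) b`
for every `x`. Since these scalars commute, `b ⟦x, y⟧ b = 0` for all `x, y`; by associativity this
forces every element `z` of `g⁽²⁾` to satisfy `b z = z b = 0`, and then `⟦z, w⟧ = zbw - wbz = 0`
on `g⁽²⁾`.
-/

namespace Matrix

variable {α : Type*} {m n : Type*}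

theorem exists_eq_vecMulVec_of_rank_le_one {K : Type*} [Field K] [Fintype n] [DecidableEq n]
    {b : Matrix m n K} (h : b.rank ≤ 1) : ∃ u v, b = vecMulVec u v := by
  obtain ⟨u, hu⟩ := (Submodule.finrank_le_one_iff_isPrincipal _).mp h
  have hcol : ∀ j, ∃ c : K, c • u = b.col j := fun j => by
    have hj : b *ᵥ Pi.single j 1 ∈ LinearMap.range b.mulVecLin := ⟨Pi.single j 1, rfl⟩
    rwa [hu, Submodule.mem_span_singleton, mulVec_single_one] at hj
  choose c hc using hcol
  refine ⟨u, c, ext fun i j => ?_⟩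
  rw [vecMulVec_apply, mul_comm, ← smul_eq_mul, ← Pi.smul_apply, hc, col_apply]

variable [Fintype m] [Fintype n]

theorem vecMulVec_mul_mul_vecMulVec [CommSemiring α] (u : m → α) (v : n → α) (x : Matrix n m α) :
    vecMulVec u v * x * vecMulVec u v = (v ⬝ᵥ x *ᵥ u) • vecMulVec u v := by
  rw [Matrix.mul_assoc, mul_vecMulVec, vecMulVec_mul_vecMulVec, vecMulVec_smul]

theorem mul_sub_mul_mul_eq_zero_of_forall_mul_mul_eq_smul [CommRing α] {b : Matrix m n α}
    (hb : ∀ x : Matrix n m α, ∃ s : α, b * x * b = s • b) (x y : Matrix n m α) :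
    b * (x * b * y - y * b * x) * b = 0 := by
  obtain ⟨s, hs⟩ := hb x
  obtain ⟨t, ht⟩ := hb y
  have hxy : b * (x * b * y) * b = s • t • b := by
    rw [show b * (x * b * y) * b = b * x * b * (y * b) by simp only [Matrix.mul_assoc], hs,
      smul_mul, ← Matrix.mul_assoc, ht]
  have hyx : b * (y * b * x) * b = t • s • b := by
    rw [show b * (y * b * x) * b = b * y * b * (x * b) by simp only [Matrix.mul_assoc], ht,
      smul_mul, ← Matrix.mul_assoc, hs]
  rw [Matrix.mul_sub, Matrix.sub_mul, hxy, hyx, smul_comm, sub_self]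

variable [Ring α] {b : Matrix m n α} {z w : Matrix n m α}

theorem mul_sub_mul_eq_zero (hz : b * z * b = 0) (hw : b * w * b = 0) :
    b * (z * b * w - w * b * z) = 0 := by
  simp only [Matrix.mul_sub, ← Matrix.mul_assoc, hz, hw, Matrix.zero_mul, sub_self]

theorem sub_mul_mul_eq_zero (hz : b * z * b = 0) (hw : b * w * b = 0) :
    (z * b * w - w * b * z) * b = 0 := by
  simp only [Matrix.sub_mul, Matrix.mul_assoc, hz, hw, Matrix.mul_zero,
    sub_self]

theorem mul_mul_sub_mul_mul_eq_zero (hz : z * b = 0) (hw : w * b = 0) :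
    z * b * w - w * b * z = 0 := by
  rw [hz, hw, Matrix.zero_mul, Matrix.zero_mul, sub_self]

end Matrix

open Matrix in
theorem solvable_of_rank_le_one_general {K : Type*} [Field K] {m n : ℕ}
    (b : Matrix (Fin m) (Fin n) K) (hrank : b.rank = 0 ∨ b.rank = 1)
    (br : Matrix (Fin n) (Fin m) K → Matrix (Fin n) (Fin m) K → Matrix (Fin n) (Fin m) K)
    (hbr : ∀ x y, br x y = x * b * y - y * b * x) :
    ∀ x₁ x₂ x₃ x₄ x₅ x₆ x₇ x₈ : Matrix (Fin n) (Fin m) K,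
      br (br (br x₁ x₂) (br x₃ x₄)) (br (br x₅ x₆) (br x₇ x₈)) = 0 := by
  obtain ⟨u, v, rfl⟩ := exists_eq_vecMulVec_of_rank_le_one (b := b) (by omega)
  have hb1 : ∀ x y, vecMulVec u v * br x y * vecMulVec u v = 0 := fun x y => by
    rw [hbr]
    exact mul_sub_mul_mul_eq_zero_of_forall_mul_mul_eq_smul
      (fun z => ⟨_, vecMulVec_mul_mul_vecMulVec u v z⟩) x y
  have hb2 : ∀ x₁ x₂ x₃ x₄, br (br x₁ x₂) (br x₃ x₄) * vecMulVec u v = 0 := fun _ _ _ _ => by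
    rw [hbr]
    exact sub_mul_mul_eq_zero (hb1 _ _) (hb1 _ _)
  intro x₁ x₂ x₃ x₄ x₅ x₆ x₇ x₈
  rw [hbr]
  exact mul_mul_sub_mul_mul_eq_zero (hb2 _ _ _ _) (hb2 _ _ _ _)

/-- If `b ∈ M_{m×n}(K)` has rank `0` or `1`, then the Lie algebra
`(M_{n×m}(K), ⟦x,y⟧ = xby − ybx)` is solvable: its derived series
terminates, `g⁽³⁾ = 0` (expressed on spanning brackets by bilinearity). -/
theorem solvable_of_rank_le_one {K : Type*} [Field K] [CharZero K] {m n : ℕ}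
    (b : Matrix (Fin m) (Fin n) K) (hrank : b.rank = 0 ∨ b.rank = 1)
    (br : Matrix (Fin n) (Fin m) K → Matrix (Fin n) (Fin m) K → Matrix (Fin n) (Fin m) K)
    (hbr : ∀ x y, br x y = x * b * y - y * b * x) :
    ∀ x₁ x₂ x₃ x₄ x₅ x₆ x₇ x₈ : Matrix (Fin n) (Fin m) K,
      br (br (br x₁ x₂) (br x₃ x₄)) (br (br x₅ x₆) (br x₇ x₈)) = 0 :=
  solvable_of_rank_le_one_general b hrank br hbr
end

section
/- Assume (m,n) ≠ (1,1). Let b_1, b_2 ∈ M_{m×n}(K) with ranks r_1 ≠ r_2. Then the Lie algebras (M_{n×m}(K), ⟦·,·⟧_{b_1}) and (M_{n×m}(K), ⟦·,·⟧_{b_2}) are not isomorphic. -/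
open LinearMap Matrix Module

namespace NotIsoAux

variable {K : Type*} [Field K] {m n p q : ℕ}

/-- The sandwich operator `z ↦ A * z * B`. -/
def sandw (A : Matrix (Fin p) (Fin p) K) (B : Matrix (Fin q) (Fin q) K) :
    Matrix (Fin p) (Fin q) K →ₗ[K] Matrix (Fin p) (Fin q) K where
  toFun z := A * z * B
  map_add' x y := by simp [Matrix.mul_add, Matrix.add_mul]
  map_smul' c x := by simp [Matrix.mul_smul, Matrix.smul_mul]

@[simp] lemma sandw_apply (A : Matrix (Fin p) (Fin p) K) (B : Matrix (Fin q) (Fin q) K)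
    (z : Matrix (Fin p) (Fin q) K) : sandw A B z = A * z * B := rfl

lemma stdBasis_repr (x : Matrix (Fin p) (Fin q) K) (i : Fin p) (j : Fin q) :
    (Matrix.stdBasis K (Fin p) (Fin q)).repr x (i, j) = x i j := by
  simp [Matrix.stdBasis, Matrix.ofLinearEquiv]

lemma trace_sandw (A : Matrix (Fin p) (Fin p) K) (B : Matrix (Fin q) (Fin q) K) :
    LinearMap.trace K _ (sandw A B) = A.trace * B.trace := by
  classical
  rw [LinearMap.trace_eq_matrix_trace K (Matrix.stdBasis K (Fin p) (Fin q))]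
  rw [Matrix.trace]
  have key : ∀ ij : Fin p × Fin q,
      (LinearMap.toMatrix (Matrix.stdBasis K (Fin p) (Fin q)) (Matrix.stdBasis K (Fin p) (Fin q))
        (sandw A B)).diag ij = A ij.1 ij.1 * B ij.2 ij.2 := by
    rintro ⟨i, j⟩
    rw [Matrix.diag, LinearMap.toMatrix_apply, stdBasis_repr, sandw_apply,
      Matrix.stdBasis_eq_single]
    rw [Matrix.mul_apply]
    simp [Matrix.mul_apply, Matrix.single, Finset.mul_sum, Finset.sum_ite_eq,
      ite_and]
  rw [Finset.sum_congr rfl (fun ij _ => key ij)]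
  rw [Fintype.sum_prod_type, Matrix.trace, Matrix.trace, Finset.sum_mul_sum]
  simp [Matrix.diag]


lemma sandw_comp (A A' : Matrix (Fin p) (Fin p) K) (B B' : Matrix (Fin q) (Fin q) K) :
    sandw A B ∘ₗ sandw A' B' = sandw (A * A') (B' * B) := by
  ext z
  simp [Matrix.mul_assoc]

variable (K) in
/-- The adjoint operator of the Lie algebra `⟦x,z⟧_b = x b z - z b x`. -/
def ad (b : Matrix (Fin m) (Fin n) K) (x : Matrix (Fin n) (Fin m) K) :
    Matrix (Fin n) (Fin m) K →ₗ[K] Matrix (Fin n) (Fin m) K :=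
  sandw (x * b) 1 - sandw 1 (b * x)

lemma ad_apply (b : Matrix (Fin m) (Fin n) K) (x z : Matrix (Fin n) (Fin m) K) :
    ad K b x z = x * b * z - z * b * x := by
  simp [ad, Matrix.mul_assoc]

variable (K) in
/-- The "radical map" whose kernel is the radical of the Killing form. -/
def cmap (b : Matrix (Fin m) (Fin n) K) :
    Matrix (Fin n) (Fin m) K →ₗ[K] Matrix (Fin m) (Fin n) K where
  toFun x := ((m : K) + n) • (b * x * b) - (2 * (b * x).trace) • b
  map_add' x y := by
    simp [Matrix.mul_add, Matrix.add_mul, trace_add, mul_add, add_smul, smul_add]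
    abel
  map_smul' c x := by
    simp only [Matrix.mul_smul, Matrix.smul_mul, trace_smul, smul_eq_mul,
      RingHom.id_apply, smul_sub, smul_smul]
    ring_nf

lemma cmap_apply (b : Matrix (Fin m) (Fin n) K) (x : Matrix (Fin n) (Fin m) K) :
    cmap K b x = ((m : K) + n) • (b * x * b) - (2 * (b * x).trace) • b := rfl

lemma killing_eq (b : Matrix (Fin m) (Fin n) K) (x y : Matrix (Fin n) (Fin m) K) :
    LinearMap.trace K _ (ad K b x ∘ₗ ad K b y) = (y * cmap K b x).trace := by
  have hcomp : ad K b x ∘ₗ ad K b y =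
      sandw (x * b * (y * b)) 1 - sandw (x * b) (b * y) - sandw (y * b) (b * x)
        + sandw 1 (b * y * (b * x)) := by
    ext z
    simp [ad_apply, Matrix.mul_assoc, Matrix.mul_sub, Matrix.sub_mul]
    abel
  rw [hcomp]
  have h1 : (x * b * (y * b)).trace = (y * (b * x * b)).trace := by
    rw [Matrix.trace_mul_comm]
    congr 1
    simp [Matrix.mul_assoc]
  have h2 : (b * y * (b * x)).trace = (y * (b * x * b)).trace := by
    rw [Matrix.mul_assoc, Matrix.trace_mul_comm]
    congr 1
    simp [Matrix.mul_assoc]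
  have h3 : (b * y).trace = (y * b).trace := Matrix.trace_mul_comm b y
  have h4 : (b * x).trace = (x * b).trace := Matrix.trace_mul_comm b x
  simp only [map_add, map_sub, trace_sandw, Matrix.trace_one, cmap_apply,
    Matrix.mul_sub, Matrix.mul_smul, Matrix.trace_sub, Matrix.trace_smul,
    h1, h2, h3, h4, smul_eq_mul, Fintype.card_fin]
  ring

variable (K) in
/-- The radical of the Killing form. -/
noncomputable def rad (b : Matrix (Fin m) (Fin n) K) :
    Submodule K (Matrix (Fin n) (Fin m) K) := LinearMap.ker (cmap K b)

lemma trace_mul_eq_zero (C : Matrix (Fin m) (Fin n) K)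
    (h : ∀ y : Matrix (Fin n) (Fin m) K, (y * C).trace = 0) : C = 0 := by
  classical
  ext i j
  have := h (Matrix.single j i 1)
  simp only [Matrix.trace, Matrix.diag, Matrix.mul_apply, Matrix.single,
    Matrix.zero_apply] at this ⊢
  simpa [Finset.sum_ite_eq, ite_and, Matrix.of_apply] using this

lemma mem_rad_iff (b : Matrix (Fin m) (Fin n) K) (x : Matrix (Fin n) (Fin m) K) :
    x ∈ rad K b ↔ ∀ y, LinearMap.trace K _ (ad K b x ∘ₗ ad K b y) = 0 := by
  constructor
  · intro hx y
    rw [killing_eq]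
    rw [rad, LinearMap.mem_ker] at hx
    simp [hx]
  · intro h
    rw [rad, LinearMap.mem_ker]
    exact trace_mul_eq_zero _ fun y => by rw [← killing_eq]; exact h y


lemma exists_ginv (b : Matrix (Fin m) (Fin n) K) :
    ∃ g : Matrix (Fin n) (Fin m) K, b * g * b = b := by
  classical
  set f := Matrix.toLin' b with hf
  obtain ⟨W', hW'⟩ := Submodule.exists_isCompl (LinearMap.range f)
  obtain ⟨σ, hσ⟩ := f.rangeRestrict.exists_rightInverse_of_surjective
    (LinearMap.range_eq_top.2 f.surjective_rangeRestrict)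
  set π := (LinearMap.range f).projectionOnto W' hW' with hπ
  refine ⟨LinearMap.toMatrix' (σ ∘ₗ (π : (Fin m → K) →ₗ[K] _)), ?_⟩
  apply Matrix.toLin'.injective
  rw [Matrix.toLin'_mul, Matrix.toLin'_mul, Matrix.toLin'_toMatrix']
  refine LinearMap.ext fun v => ?_
  simp only [LinearMap.comp_apply, ← hf]
  have h1 : π (f v) = ⟨f v, LinearMap.mem_range_self f v⟩ := by
    rw [hπ, Submodule.projectionOnto_apply_left hW' ⟨f v, LinearMap.mem_range_self f v⟩]
  rw [h1]
  have h2 := LinearMap.ext_iff.1 hσ ⟨f v, LinearMap.mem_range_self f v⟩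
  have h3 : f (σ ⟨f v, LinearMap.mem_range_self f v⟩) = f v := by
    have := congrArg (Subtype.val) h2
    simpa using this
  exact h3

lemma trace_toLin' (A : Matrix (Fin p) (Fin p) K) :
    LinearMap.trace K _ (Matrix.toLin' A) = A.trace := by
  rw [LinearMap.trace_eq_matrix_trace K (Pi.basisFun K (Fin p)),
    LinearMap.toMatrix_eq_toMatrix', LinearMap.toMatrix'_toLin']

lemma trace_idem_matrix (A : Matrix (Fin p) (Fin p) K) (h : A * A = A) :
    A.trace = (A.rank : K) := by
  have hc : Matrix.toLin' A ∘ₗ Matrix.toLin' A = Matrix.toLin' A := by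
    rw [← Matrix.toLin'_mul, h]
  have hproj : LinearMap.IsProj (LinearMap.range (Matrix.toLin' A)) (Matrix.toLin' A) := by
    refine ⟨fun x => LinearMap.mem_range_self _ x, ?_⟩
    rintro x ⟨y, rfl⟩
    exact LinearMap.ext_iff.1 hc y
  have := hproj.trace
  rw [trace_toLin'] at this
  rw [this]
  congr 1

lemma trace_idem_linmap {V : Type*} [AddCommGroup V] [Module K V] [FiniteDimensional K V]
    (f : V →ₗ[K] V) (h : f ∘ₗ f = f) :
    LinearMap.trace K _ f = (finrank K (LinearMap.range f) : K) := by
  have hproj : LinearMap.IsProj (LinearMap.range f) f := by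
    refine ⟨fun x => LinearMap.mem_range_self _ x, ?_⟩
    rintro x ⟨y, rfl⟩
    exact LinearMap.ext_iff.1 h y
  exact hproj.trace


variable (K) in
def psi (b : Matrix (Fin m) (Fin n) K) :
    Matrix (Fin n) (Fin m) K →ₗ[K] Matrix (Fin m) (Fin n) K where
  toFun x := b * x * b
  map_add' x y := by simp [Matrix.mul_add, Matrix.add_mul]
  map_smul' c x := by simp [Matrix.mul_smul, Matrix.smul_mul]

@[simp] lemma psi_apply (b : Matrix (Fin m) (Fin n) K) (x : Matrix (Fin n) (Fin m) K) :
    psi K b x = b * x * b := rfl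

lemma finrank_rad [CharZero K] (b : Matrix (Fin m) (Fin n) K) (hpos : 0 < m + n) :
    finrank K (rad K b) + b.rank * b.rank
      = n * m + (if b.rank = m ∧ b.rank = n then 1 else 0) := by
  classical
  have hrm : b.rank ≤ m := b.rank_le_card_height.trans (Fintype.card_fin m).le
  have hrn : b.rank ≤ n := b.rank_le_card_width.trans (Fintype.card_fin n).le
  by_cases hsq : b.rank = m ∧ b.rank = n
  · -- square invertible case
    obtain ⟨hm, hn⟩ := hsq
    have hnm : n = m := hn.symm.trans hm
    subst hnm
    have hm0 : 0 < n := by omega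
    haveI : NeZero n := ⟨by omega⟩
    have hsurj : Function.Surjective b.mulVec := by
      have hrange : LinearMap.range b.mulVecLin = ⊤ := by
        apply Submodule.eq_top_of_finrank_eq
        rw [show finrank K (LinearMap.range b.mulVecLin) = b.rank from rfl, hn,
          finrank_fintype_fun_eq_card, Fintype.card_fin]
      intro w
      obtain ⟨v, hv⟩ := LinearMap.range_eq_top.1 hrange w
      exact ⟨v, hv⟩
    have hunit : IsUnit b := Matrix.mulVec_surjective_iff_isUnit.1 hsurj
    have hdet : IsUnit b.det := (Matrix.isUnit_iff_isUnit_det b).1 hunit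
    have hbi : b * b⁻¹ = 1 := Matrix.mul_nonsing_inv b hdet
    have hib : b⁻¹ * b = 1 := Matrix.nonsing_inv_mul b hdet
    have hinv_ne : b⁻¹ ≠ 0 := by
      intro h0
      have h1 : (1 : Matrix (Fin n) (Fin n) K) = 0 := by rw [← hbi, h0, Matrix.mul_zero]
      have := congrFun (congrFun h1 ⟨0, hm0⟩) ⟨0, hm0⟩
      simp [Matrix.one_apply] at this
    have hcoef : ((n : K) + n) ≠ 0 := by
      have h1 : ((n : K) + n) = ((n + n : ℕ) : K) := by push_cast; ring
      rw [h1]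
      exact Nat.cast_ne_zero.2 (by omega)
    have hradspan : rad K b = Submodule.span K {b⁻¹} := by
      apply le_antisymm
      · intro x hx
        rw [rad, LinearMap.mem_ker, cmap_apply, sub_eq_zero] at hx
        have hx2 := congrArg (fun z => b⁻¹ * z * b⁻¹) hx
        simp only [Matrix.mul_smul, Matrix.smul_mul] at hx2
        have e1 : b⁻¹ * (b * x * b) * b⁻¹ = x := by
          rw [← Matrix.mul_assoc, ← Matrix.mul_assoc, hib, Matrix.one_mul,
            Matrix.mul_assoc, hbi, Matrix.mul_one]
        have e2 : b⁻¹ * b * b⁻¹ = b⁻¹ := by rw [hib, Matrix.one_mul]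
        rw [e1, e2] at hx2
        rw [Submodule.mem_span_singleton]
        refine ⟨((n : K) + n)⁻¹ * (2 * (b * x).trace), ?_⟩
        have h3 := congrArg (fun z => ((n : K) + n)⁻¹ • z) hx2
        simp only [smul_smul, inv_mul_cancel₀ hcoef, one_smul] at h3
        rw [← h3]
      · rw [Submodule.span_le, Set.singleton_subset_iff]
        rw [SetLike.mem_coe, rad, LinearMap.mem_ker, cmap_apply]
        rw [Matrix.mul_assoc, hib, Matrix.mul_one, hbi, Matrix.trace_one,
          Fintype.card_fin, ← sub_smul,
          show ((n : K) + n) - 2 * (n : K) = 0 by ring, zero_smul]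
    rw [hradspan, finrank_span_singleton hinv_ne]
    rw [if_pos ⟨hm, hn⟩, hn]
    ring
  · -- degenerate rank case
    have h2r : 2 * b.rank ≠ m + n := by
      intro h
      exact hsq ⟨by omega, by omega⟩
    obtain ⟨g, hg⟩ := exists_ginv b
    have hg' : b * (g * b) = b := by rw [← Matrix.mul_assoc, hg]
    have hpp : (b * g) * (b * g) = b * g := by
      rw [← Matrix.mul_assoc, hg]
    have hqq : (g * b) * (g * b) = g * b := by
      rw [← Matrix.mul_assoc, Matrix.mul_assoc g b g, Matrix.mul_assoc g (b * g) b, hg]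
    have hrkp : (b * g).rank = b.rank := by
      apply le_antisymm (Matrix.rank_mul_le_left b g)
      calc b.rank = ((b * g) * b).rank := by rw [Matrix.mul_assoc, hg']
        _ ≤ (b * g).rank := Matrix.rank_mul_le_left _ b
    have htrp : (b * g).trace = (b.rank : K) := by
      rw [trace_idem_matrix _ hpp, hrkp]
    have htrq : (g * b).trace = (b.rank : K) := by
      rw [Matrix.trace_mul_comm, htrp]
    have haux : ∀ x : Matrix (Fin n) (Fin m) K, ((b * x * b) * g).trace = (b * x).trace := by
      intro x
      rw [Matrix.mul_assoc (b * x) b g, Matrix.trace_mul_comm (b * x) (b * g),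
        ← Matrix.mul_assoc, hg]
    have hMN : ((m : K) + n) ≠ 0 := by
      have : ((m : K) + n) = ((m + n : ℕ) : K) := by push_cast; ring
      rw [this]
      exact Nat.cast_ne_zero.2 (by omega)
    have hker : LinearMap.ker (cmap K b) = LinearMap.ker (psi K b) := by
      ext x
      simp only [LinearMap.mem_ker, cmap_apply, psi_apply]
      constructor
      · intro hx
        rw [sub_eq_zero] at hx
        have hx2 := congrArg (fun z => (z * g).trace) hx
        simp only [Matrix.smul_mul, Matrix.trace_smul, smul_eq_mul, haux, htrp] at hx2
        have hcast : ((m : K) + n) - 2 * (b.rank : K) ≠ 0 := by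
          intro h
          apply h2r
          have h9 : ((2 * b.rank : ℕ) : K) = ((m + n : ℕ) : K) := by
            push_cast
            linear_combination -h
          exact_mod_cast h9
        have htr0 : (b * x).trace = 0 := by
          have h5 : (((m : K) + n) - 2 * (b.rank : K)) * (b * x).trace = 0 := by
            linear_combination hx2
          rcases mul_eq_zero.1 h5 with h | h
          · exact absurd h hcast
          · exact h
        rw [htr0, mul_zero, zero_smul] at hx
        rcases smul_eq_zero.1 hx with h | h
        · exact absurd h hMN
        · exact h
      · intro hx
        have htr0 : (b * x).trace = 0 := by rw [← haux x, hx, Matrix.zero_mul, Matrix.trace_zero]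
        rw [hx, htr0, smul_zero, mul_zero, zero_smul, sub_zero]
    set π := sandw (b * g) (g * b) with hπdef
    have hππ : π ∘ₗ π = π := by rw [hπdef, sandw_comp, hpp, hqq]
    have htrπ : LinearMap.trace K _ π = ((b.rank * b.rank : ℕ) : K) := by
      rw [hπdef, trace_sandw, htrp, htrq]
      push_cast
      ring
    have hrangeπ : LinearMap.range π = LinearMap.range (psi K b) := by
      apply le_antisymm
      · rintro z ⟨w, rfl⟩
        refine ⟨g * w * g, ?_⟩
        show b * (g * w * g) * b = π w
        rw [hπdef, sandw_apply]
        simp [Matrix.mul_assoc]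
      · rintro z ⟨x, rfl⟩
        refine ⟨b * x * b, ?_⟩
        show π (b * x * b) = psi K b x
        rw [hπdef, sandw_apply, psi_apply]
        have A1 : (b * g) * (b * x * b) = b * x * b := by
          rw [show b * x * b = b * (x * b) from Matrix.mul_assoc b x b,
            ← Matrix.mul_assoc (b * g) b (x * b), hg]
        have A2 : (b * x * b) * (g * b) = b * x * b := by
          rw [Matrix.mul_assoc (b * x) b (g * b), hg']
        rw [A1, A2]
    have hfinπ : finrank K (LinearMap.range π) = b.rank * b.rank := by
      have h7 := trace_idem_linmap π hππ
      rw [htrπ] at h7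
      exact_mod_cast h7.symm
    have h6 : finrank K (LinearMap.range (psi K b)) = b.rank * b.rank := by
      rw [← hrangeπ]
      exact hfinπ
    have h8 := LinearMap.finrank_range_add_finrank_ker (psi K b)
    have hdim : finrank K (Matrix (Fin n) (Fin m) K) = n * m := by
      rw [Module.finrank_matrix]
      simp
    rw [hdim] at h8
    rw [show rad K b = LinearMap.ker (psi K b) from hker, if_neg hsq]
    omega

end NotIsoAux

/-- Fixed-dimension classification, necessity: if `(m,n) ≠ (1,1)` and
`b₁, b₂ ∈ M_{m×n}(K)` have different ranks, then the Lie algebras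
`(M_{n×m}(K), ⟦·,·⟧_{b₁})` and `(M_{n×m}(K), ⟦·,·⟧_{b₂})` are not
isomorphic. -/
theorem not_iso_of_rank_ne {K : Type*} [Field K] [CharZero K] {m n : ℕ}
    (hmn : (m, n) ≠ (1, 1))
    (b₁ b₂ : Matrix (Fin m) (Fin n) K) (hr : b₁.rank ≠ b₂.rank) :
    ¬ ∃ e : Matrix (Fin n) (Fin m) K ≃ₗ[K] Matrix (Fin n) (Fin m) K,
      ∀ x y, e (x * b₁ * y - y * b₁ * x) = e x * b₂ * e y - e y * b₂ * e x := by
  classical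
  open NotIsoAux in
  rintro ⟨e, he⟩
  have hrm₁ : b₁.rank ≤ m := b₁.rank_le_card_height.trans (Fintype.card_fin m).le
  have hrn₁ : b₁.rank ≤ n := b₁.rank_le_card_width.trans (Fintype.card_fin n).le
  have hrm₂ : b₂.rank ≤ m := b₂.rank_le_card_height.trans (Fintype.card_fin m).le
  have hrn₂ : b₂.rank ≤ n := b₂.rank_le_card_width.trans (Fintype.card_fin n).le
  rcases Nat.eq_zero_or_pos m with hm | hm
  · exact hr (by omega)
  rcases Nat.eq_zero_or_pos n with hn | hn
  · exact hr (by omega)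
  have hpos : 0 < m + n := by omega
  -- the isomorphism intertwines the adjoint operators
  have hconj : ∀ x : Matrix (Fin n) (Fin m) K,
      NotIsoAux.ad K b₂ (e x) = e.conj (NotIsoAux.ad K b₁ x) := by
    intro x
    refine LinearMap.ext fun z => ?_
    rw [LinearEquiv.conj_apply_apply, NotIsoAux.ad_apply, NotIsoAux.ad_apply,
      he x (e.symm z), LinearEquiv.apply_symm_apply]
  have hkill : ∀ x y : Matrix (Fin n) (Fin m) K,
      LinearMap.trace K _ (NotIsoAux.ad K b₂ (e x) ∘ₗ NotIsoAux.ad K b₂ (e y))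
        = LinearMap.trace K _ (NotIsoAux.ad K b₁ x ∘ₗ NotIsoAux.ad K b₁ y) := by
    intro x y
    rw [hconj, hconj, ← LinearEquiv.conj_comp, LinearMap.trace_conj']
  -- hence it maps radical to radical
  have hmap : Submodule.map (e : Matrix (Fin n) (Fin m) K →ₗ[K] Matrix (Fin n) (Fin m) K)
      (NotIsoAux.rad K b₁) = NotIsoAux.rad K b₂ := by
    ext z
    rw [Submodule.mem_map_equiv, NotIsoAux.mem_rad_iff, NotIsoAux.mem_rad_iff]
    constructor
    · intro h y
      have := h (e.symm y)
      rw [← hkill, LinearEquiv.apply_symm_apply, LinearEquiv.apply_symm_apply] at this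
      exact this
    · intro h y
      have := h (e y)
      rw [← LinearEquiv.apply_symm_apply e z, hkill] at this
      exact this
  have hfr : finrank K (NotIsoAux.rad K b₁) = finrank K (NotIsoAux.rad K b₂) := by
    rw [← hmap, LinearEquiv.finrank_map_eq]
  have k₁ := NotIsoAux.finrank_rad b₁ hpos
  have k₂ := NotIsoAux.finrank_rad b₂ hpos
  rw [hfr] at k₁
  -- now pure arithmetic
  set r₁ := b₁.rank with hr₁
  set r₂ := b₂.rank with hr₂
  split_ifs at k₁ k₂ with h₁ h₂ h₂
  · exact hr (h₁.1.trans h₂.1.symm)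
  · -- r₁ = m = n, r₁² = r₂² + 1
    obtain ⟨hm₁, hn₁⟩ := h₁
    have hsq : r₁ * r₁ = r₂ * r₂ + 1 := by omega
    have hlt : r₂ < r₁ := by
      rcases Nat.lt_or_ge r₂ r₁ with h | h
      · exact h
      · have := Nat.mul_le_mul h h
        omega
    have h5 : (r₂ + 1) * (r₂ + 1) ≤ r₁ * r₁ := Nat.mul_le_mul hlt hlt
    have h6 : (r₂ + 1) * (r₂ + 1) = r₂ * r₂ + 2 * r₂ + 1 := by ring
    rw [h6, hsq] at h5
    have hr₂0 : r₂ = 0 := by omega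
    have h7 : r₁ * r₁ = 1 := by rw [hsq, hr₂0]
    have hr₁1 : r₁ = 1 := by
      have h9 : r₁ ≠ 0 := by rintro h0; rw [h0] at h7; simp at h7
      have h10 : r₁ < 2 := by
        by_contra hge
        push_neg at hge
        have h11 := Nat.mul_le_mul hge hge
        omega
      omega
    exact hmn (by rw [Prod.mk.injEq]; omega)
  · -- symmetric
    obtain ⟨hm₂, hn₂⟩ := h₂
    have hsq : r₂ * r₂ = r₁ * r₁ + 1 := by omega
    have hlt : r₁ < r₂ := by
      rcases Nat.lt_or_ge r₁ r₂ with h | h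
      · exact h
      · have := Nat.mul_le_mul h h
        omega
    have h5 : (r₁ + 1) * (r₁ + 1) ≤ r₂ * r₂ := Nat.mul_le_mul hlt hlt
    have h6 : (r₁ + 1) * (r₁ + 1) = r₁ * r₁ + 2 * r₁ + 1 := by ring
    rw [h6, hsq] at h5
    have hr₁0 : r₁ = 0 := by omega
    have h7 : r₂ * r₂ = 1 := by rw [hsq, hr₁0]
    have hr₂1 : r₂ = 1 := by
      have h9 : r₂ ≠ 0 := by rintro h0; rw [h0] at h7; simp at h7
      have h10 : r₂ < 2 := by
        by_contra hge
        push_neg at hge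
        have h11 := Nat.mul_le_mul hge hge
        omega
      omega
    exact hmn (by rw [Prod.mk.injEq]; omega)
  · have hsq : r₁ * r₁ = r₂ * r₂ := by omega
    rcases lt_trichotomy r₁ r₂ with h | h | h
    · have := Nat.mul_self_lt_mul_self h
      omega
    · exact hr h
    · have := Nat.mul_self_lt_mul_self h
      omega
end

section
/- Let b ∈ M_{m×n}(K) have rank r ≥ 1 and consider g = (M_{n×m}(K), ⟦x,y⟧ = xby − ybx). Then: (a) dim of the Levi factor of g is r²−1; (b) dim of the solvable radical of g is mn − r² + 1; (c) dim Z(g) = 1 if r = m = n, and (m−r)(n−r) otherwise. -/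
open Matrix

noncomputable def sandwichLin (K : Type*) [CommSemiring K] {a b c d : Type*} [Fintype b] [Fintype c]
    (A : Matrix a b K) (C : Matrix c d K) : Matrix b c K →ₗ[K] Matrix a d K where
  toFun x := A * x * C
  map_add' x y := by simp [Matrix.mul_add, Matrix.add_mul]
  map_smul' k x := by simp [Matrix.mul_smul, Matrix.smul_mul]

@[simp] lemma sandwichLin_apply {K : Type*} [CommSemiring K] {a b c d : Type*} [Fintype b]
    [Fintype c] (A : Matrix a b K) (C : Matrix c d K) (x : Matrix b c K) :
    sandwichLin K A C x = A * x * C := rfl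

lemma mul_std_mul_apply {K : Type*} [CommRing K] {a n m d : Type*} [Fintype n] [Fintype m]
    [DecidableEq n] [DecidableEq m]
    (A : Matrix a n K) (B : Matrix m d K) (i : n) (j : m) (k : a) (l : d) :
    (A * Matrix.single i j (1:K) * B) k l = A k i * B j l := by
  simp [Matrix.mul_apply, Matrix.single, ite_and, Finset.mul_sum, Finset.sum_ite_eq,
    Finset.sum_ite_eq']

lemma stdBasis_repr' {K : Type*} [Field K] {a b : Type*} [Fintype a] [Fintype b]
    [DecidableEq a] [DecidableEq b] (x : Matrix a b K) (ij : a × b) :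
    (Matrix.stdBasis K a b).repr x ij = x ij.1 ij.2 := by
  obtain ⟨i, j⟩ := ij
  simp [Matrix.stdBasis, Module.Basis.repr_reindex_apply, Pi.basis_repr]

lemma trace_sandwich {K : Type*} [Field K] {a b : Type*} [Fintype a] [Fintype b]
    [DecidableEq a] [DecidableEq b] (A : Matrix a a K) (C : Matrix b b K) :
    LinearMap.trace K (Matrix a b K) (sandwichLin K A C) = Matrix.trace A * Matrix.trace C := by
  classical
  rw [LinearMap.trace_eq_matrix_trace K (Matrix.stdBasis K a b)]
  rw [Matrix.trace]
  have hdiag : ∀ ij : a × b,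
      (LinearMap.toMatrix (Matrix.stdBasis K a b) (Matrix.stdBasis K a b)
        (sandwichLin K A C)).diag ij = A ij.1 ij.1 * C ij.2 ij.2 := by
    rintro ⟨i, j⟩
    rw [Matrix.diag, LinearMap.toMatrix_apply, stdBasis_repr']
    rw [Matrix.stdBasis_eq_single]
    simp [mul_std_mul_apply]
  rw [Finset.sum_congr rfl fun ij _ => hdiag ij]
  rw [Matrix.trace, Matrix.trace, Finset.sum_mul_sum]
  rw [← Finset.sum_product']
  rfl

lemma scalar_pair {K : Type*} [Field K] {n m : ℕ} (hn : 0 < n) (hm : 0 < m)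
    {B : Matrix (Fin m) (Fin m) K} {C : Matrix (Fin n) (Fin n) K}
    (h : ∀ x : Matrix (Fin n) (Fin m) K, x * B = C * x) :
    ∃ c : K, B = c • 1 ∧ C = c • 1 := by
  have key : ∀ (i k : Fin n) (j l : Fin m),
      (if i = k then B j l else 0) = (if j = l then C k i else 0) := by
    intro i k j l
    have h1 : (Matrix.single i j (1:K) * B) k l = (if i = k then B j l else 0) := by
      simp [Matrix.mul_apply, Matrix.single, ite_and, Finset.sum_ite_eq]
    have h2 : (C * Matrix.single i j (1:K)) k l = (if j = l then C k i else 0) := by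
      simp [Matrix.mul_apply, Matrix.single, ite_and, Finset.sum_ite_eq',
        mul_comm]
    rw [← h1, ← h2, h]
  set i0 : Fin n := ⟨0, hn⟩
  set j0 : Fin m := ⟨0, hm⟩
  have hB : ∀ j l, B j l = if j = l then C i0 i0 else 0 := by
    intro j l
    have := key i0 i0 j l
    simpa using this
  have hC : ∀ k i, C k i = if i = k then C i0 i0 else 0 := by
    intro k i
    have := key i k j0 j0
    simp only [if_pos rfl] at this
    rw [hB j0 j0, if_pos rfl] at this
    exact this.symm
  refine ⟨C i0 i0, ?_, ?_⟩
  · ext j l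
    rw [hB j l, Matrix.smul_apply, Matrix.one_apply]
    by_cases hjl : j = l <;> simp [hjl]
  · ext k i
    rw [hC k i, Matrix.smul_apply, Matrix.one_apply]
    by_cases hki : k = i
    · simp [hki]
    · simp [hki, Ne.symm hki]

lemma exists_rank_fact {K : Type*} [Field K] {m n r : ℕ} (b : Matrix (Fin m) (Fin n) K)
    (hrank : b.rank = r) :
    ∃ (p : Matrix (Fin m) (Fin r) K) (p' : Matrix (Fin r) (Fin m) K)
      (q : Matrix (Fin r) (Fin n) K) (q' : Matrix (Fin n) (Fin r) K),
      b = p * q ∧ p' * p = 1 ∧ q * q' = 1 := by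
  classical
  set β := b.mulVecLin with hβ
  have hW : Module.finrank K (LinearMap.range β) = r := hrank
  let bas : Module.Basis (Fin r) K (LinearMap.range β) := Module.finBasisOfFinrankEq K _ hW
  let ε : (LinearMap.range β) ≃ₗ[K] (Fin r → K) := bas.equivFun
  let qL : (Fin n → K) →ₗ[K] (Fin r → K) := ε.toLinearMap ∘ₗ β.rangeRestrict
  let pL : (Fin r → K) →ₗ[K] (Fin m → K) := (LinearMap.range β).subtype ∘ₗ ε.symm.toLinearMap
  have hpq : pL ∘ₗ qL = β := by
    ext x
    simp [pL, qL]
  have hker : LinearMap.ker pL = ⊥ := by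
    rw [LinearMap.ker_eq_bot]
    exact (Submodule.injective_subtype _).comp ε.symm.injective
  obtain ⟨gL, hg⟩ := pL.exists_leftInverse_of_injective hker
  have hsur : LinearMap.range qL = ⊤ := by
    rw [LinearMap.range_comp, LinearMap.range_rangeRestrict, Submodule.map_top,
      LinearEquiv.range]
  obtain ⟨hL, hh⟩ := qL.exists_rightInverse_of_surjective hsur
  refine ⟨LinearMap.toMatrix' pL, LinearMap.toMatrix' gL, LinearMap.toMatrix' qL,
    LinearMap.toMatrix' hL, ?_, ?_, ?_⟩
  · have : LinearMap.toMatrix' β = b := by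
      rw [hβ, ← Matrix.toLin'_apply', LinearMap.toMatrix'_toLin']
    rw [← this, ← hpq, LinearMap.toMatrix'_comp]
  · rw [← LinearMap.toMatrix'_comp, hg, LinearMap.toMatrix'_id]
  · rw [← LinearMap.toMatrix'_comp, hh, LinearMap.toMatrix'_id]

lemma finrank_ker_trace {K : Type*} [Field K] {r : ℕ} (hr : 1 ≤ r) :
    Module.finrank K ↥(LinearMap.ker (Matrix.traceLinearMap (Fin r) K K)) = r * r - 1 := by
  have hsurj : LinearMap.range (Matrix.traceLinearMap (Fin r) K K) = ⊤ := by
    rw [LinearMap.range_eq_top]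
    intro c
    refine ⟨Matrix.diagonal (Pi.single ⟨0, hr⟩ c), ?_⟩
    simp [Matrix.trace_diagonal]
  have h2 := LinearMap.finrank_range_add_finrank_ker (Matrix.traceLinearMap (Fin r) K K)
  rw [hsurj, finrank_top] at h2
  have htot : Module.finrank K (Matrix (Fin r) (Fin r) K) = r * r := by
    simp [Module.finrank_matrix]
  have h3 : Module.finrank K K = 1 := Module.finrank_self K
  omega
section
attribute [local instance 100] LieRing.ofAssociativeRing
lemma levi_aux {K : Type*} [Field K] [CharZero K] {m n r : ℕ} (hr : 1 ≤ r)
    (hrm : r ≤ m) (hrn : r ≤ n)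
    (b : Matrix (Fin m) (Fin n) K)
    (p : Matrix (Fin m) (Fin r) K) (p' : Matrix (Fin r) (Fin m) K)
    (q : Matrix (Fin r) (Fin n) K) (q' : Matrix (Fin n) (Fin r) K)
    (hb : b = p * q) (hp : p' * p = 1) (hq : q * q' = 1)
    (br : Matrix (Fin n) (Fin m) K → Matrix (Fin n) (Fin m) K → Matrix (Fin n) (Fin m) K)
    (hbr : ∀ x y, br x y = x * b * y - y * b * x) :
    ∃ Rsub Ssub : Submodule K (Matrix (Fin n) (Fin m) K),
      IsCompl Ssub Rsub ∧
      (∀ x y, y ∈ Rsub → br x y ∈ Rsub) ∧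
      (∀ x₁ ∈ Rsub, ∀ x₂ ∈ Rsub, ∀ x₃ ∈ Rsub, ∀ x₄ ∈ Rsub,
        ∀ x₅ ∈ Rsub, ∀ x₆ ∈ Rsub, ∀ x₇ ∈ Rsub, ∀ x₈ ∈ Rsub,
        br (br (br x₁ x₂) (br x₃ x₄)) (br (br x₅ x₆) (br x₇ x₈)) = 0) ∧
      (∃ f : ↥(LieAlgebra.SpecialLinear.sl (Fin r) K) →ₗ[K] Matrix (Fin n) (Fin m) K,
        Function.Injective f ∧ LinearMap.range f = Ssub ∧
        ∀ u v, f ⁅u, v⁆ = br (f u) (f v)) ∧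
      Module.finrank K Ssub = r ^ 2 - 1 ∧
      Module.finrank K Rsub = m * n - r ^ 2 + 1 := by
  classical
  have hrK : (r : K) ≠ 0 := Nat.cast_ne_zero.mpr (by omega)
  set ext : Matrix (Fin n) (Fin m) K →ₗ[K] Matrix (Fin r) (Fin r) K := sandwichLin K q p with hext
  set f₀ : Matrix (Fin r) (Fin r) K →ₗ[K] Matrix (Fin n) (Fin m) K := sandwichLin K q' p' with hf₀
  set t : Matrix (Fin r) (Fin r) K →ₗ[K] Matrix (Fin r) (Fin r) K :=
    LinearMap.id - (Matrix.traceLinearMap (Fin r) K K).smulRight ((r:K)⁻¹ • 1) with hT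
  have ht_apply : ∀ A : Matrix (Fin r) (Fin r) K,
      t A = A - ((r:K)⁻¹ * Matrix.trace A) • 1 := by
    intro A
    simp [hT, LinearMap.sub_apply, LinearMap.smulRight_apply, smul_smul, mul_comm]
  have htr_t : ∀ A : Matrix (Fin r) (Fin r) K, Matrix.trace (t A) = 0 := by
    intro A
    rw [ht_apply, Matrix.trace_sub, Matrix.trace_smul, Matrix.trace_one]
    simp only [Fintype.card_fin, smul_eq_mul]
    field_simp
    ring
  have ht_scalar : ∀ c : K, t (c • (1 : Matrix (Fin r) (Fin r) K)) = 0 := by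
    intro c
    rw [ht_apply, Matrix.trace_smul, Matrix.trace_one]
    simp only [Fintype.card_fin, smul_eq_mul]
    have hc : (r:K)⁻¹ * (c * (r:K)) = c := by
      rw [mul_comm c ((r:K)), ← mul_assoc, inv_mul_cancel₀ hrK, one_mul]
    rw [hc, sub_self]
  have ht_traceless : ∀ A : Matrix (Fin r) (Fin r) K, Matrix.trace A = 0 → t A = A := by
    intro A hA
    rw [ht_apply, hA]
    simp
  have hext_f₀ : ∀ A : Matrix (Fin r) (Fin r) K, ext (f₀ A) = A := by
    intro A
    show q * (q' * A * p') * p = A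
    have h1 : q * (q' * A * p') * p = (q * q') * A * (p' * p) := by
      simp only [Matrix.mul_assoc]
    rw [h1, hq, hp, Matrix.one_mul, Matrix.mul_one]
  have hbr' : ∀ x y, br x y = x * p * (q * y) - y * p * (q * x) := by
    intro x y
    rw [hbr, hb]
    simp only [Matrix.mul_assoc]
  have hext_br : ∀ x y, ext (br x y) = ext x * ext y - ext y * ext x := by
    intro x y
    show q * (br x y) * p = (q * x * p) * (q * y * p) - (q * y * p) * (q * x * p)
    rw [hbr' x y]
    simp only [Matrix.sub_mul, Matrix.mul_sub, Matrix.mul_assoc]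
  set Rsub : Submodule K (Matrix (Fin n) (Fin m) K) := LinearMap.ker (t ∘ₗ ext) with hRsub
  have hmemR : ∀ x, x ∈ Rsub ↔ ∃ c : K, ext x = c • 1 := by
    intro x
    rw [hRsub, LinearMap.mem_ker, LinearMap.comp_apply]
    constructor
    · intro hx
      refine ⟨(r:K)⁻¹ * Matrix.trace (ext x), ?_⟩
      have h1 := ht_apply (ext x)
      rw [hx] at h1
      exact (sub_eq_zero.mp h1.symm)
    · rintro ⟨c, hc⟩
      rw [hc, ht_scalar]
  set sl : LieSubalgebra K (Matrix (Fin r) (Fin r) K) := LieAlgebra.SpecialLinear.sl (Fin r) K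
    with hsl
  have hslmem : ∀ A : Matrix (Fin r) (Fin r) K, A ∈ sl ↔ Matrix.trace A = 0 := by
    intro A; rfl
  set f : ↥sl →ₗ[K] Matrix (Fin n) (Fin m) K :=
    f₀ ∘ₗ (LieSubalgebra.toSubmodule sl).subtype with hf
  set Ssub : Submodule K (Matrix (Fin n) (Fin m) K) := LinearMap.range f with hSsub
  refine ⟨Rsub, Ssub, ?_, ?_, ?_, ?_, ?_, ?_⟩
  · -- IsCompl
    constructor
    · rw [Submodule.disjoint_def]
      intro x hxS hxR
      obtain ⟨u, rfl⟩ := hxS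
      have hfval : f u = f₀ u.val := rfl
      have h2 : (t ∘ₗ ext) (f u) = 0 := hxR
      rw [LinearMap.comp_apply, hfval, hext_f₀,
        ht_traceless u.val ((hslmem u.val).mp u.2)] at h2
      rw [hfval, h2, map_zero]
    · rw [codisjoint_iff, eq_top_iff]
      intro x _
      have hmem : t (ext x) ∈ sl := (hslmem _).mpr (htr_t (ext x))
      refine Submodule.mem_sup.mpr ⟨f ⟨t (ext x), hmem⟩, ⟨⟨t (ext x), hmem⟩, rfl⟩,
        x - f ⟨t (ext x), hmem⟩, ?_, by rw [add_comm, sub_add_cancel]⟩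
      rw [hmemR]
      refine ⟨(r:K)⁻¹ * Matrix.trace (ext x), ?_⟩
      have h1 : ext (f ⟨t (ext x), hmem⟩) = t (ext x) := hext_f₀ _
      rw [map_sub, h1, ht_apply]
      exact sub_sub_cancel _ _
  · -- ideal
    intro x y hy
    obtain ⟨c, hc⟩ := (hmemR y).mp hy
    rw [hmemR]
    refine ⟨0, ?_⟩
    rw [hext_br, hc]
    simp [Matrix.mul_smul, Matrix.smul_mul]
  · -- solvability
    intro x₁ h₁ x₂ h₂ x₃ h₃ x₄ h₄ x₅ h₅ x₆ h₆ x₇ h₇ x₈ h₈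
    have hy : ∀ a c, a ∈ Rsub → c ∈ Rsub → ext (br a c) = 0 := by
      intro a c ha hc
      obtain ⟨ca, hca⟩ := (hmemR a).mp ha
      obtain ⟨cc, hcc⟩ := (hmemR c).mp hc
      rw [hext_br, hca, hcc]
      simp [Matrix.mul_smul, Matrix.smul_mul, smul_smul, mul_comm]
    have key2 : ∀ u v, ext u = 0 → ext v = 0 → br u v * p = 0 := by
      intro u v hu hv
      have hu' : q * u * p = 0 := hu
      have hv' : q * v * p = 0 := hv
      rw [hbr', Matrix.sub_mul]
      have e1 : u * p * (q * v) * p = (u * p) * (q * v * p) := by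
        simp only [Matrix.mul_assoc]
      have e2 : v * p * (q * u) * p = (v * p) * (q * u * p) := by
        simp only [Matrix.mul_assoc]
      rw [e1, e2, hu', hv', Matrix.mul_zero, Matrix.mul_zero, sub_zero]
    have key3 : ∀ z z' : Matrix (Fin n) (Fin m) K, z * p = 0 → z' * p = 0 → br z z' = 0 := by
      intro z z' hz hz'
      rw [hbr', hz, hz', Matrix.zero_mul, Matrix.zero_mul, sub_zero]
    exact key3 _ _ (key2 _ _ (hy _ _ h₁ h₂) (hy _ _ h₃ h₄))
      (key2 _ _ (hy _ _ h₅ h₆) (hy _ _ h₇ h₈))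
  · -- Levi embedding
    refine ⟨f, ?_, rfl, ?_⟩
    · intro u v huv
      have h1 : ext (f u) = u.val := hext_f₀ u.val
      have h2 : ext (f v) = v.val := hext_f₀ v.val
      apply Subtype.ext
      rw [← h1, ← h2, huv]
    · intro u v
      have hcoe : (⁅u, v⁆ : ↥sl).val = u.val * v.val - v.val * u.val := rfl
      have hfmul : ∀ A B : Matrix (Fin r) (Fin r) K,
          (f₀ A) * p * (q * (f₀ B)) = f₀ (A * B) := by
        intro A B
        show q' * A * p' * p * (q * (q' * B * p')) = q' * (A * B) * p'
        have h1 : q' * A * p' * p * (q * (q' * B * p'))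
            = q' * A * (p' * p) * (q * q' * (B * p')) := by
          simp only [Matrix.mul_assoc]
        rw [h1, hp, hq, Matrix.mul_one, Matrix.one_mul]
        simp only [Matrix.mul_assoc]
      have hfval : ∀ w : ↥sl, f w = f₀ w.val := fun w => rfl
      rw [hfval, hfval, hfval, hcoe, map_sub, hbr' (f₀ u.val) (f₀ v.val), hfmul, hfmul]
  · -- dim S
    have hinj : Function.Injective f := by
      intro u v huv
      apply Subtype.ext
      rw [← hext_f₀ u.val, ← hext_f₀ v.val]
      exact congrArg ext huv
    rw [hSsub, LinearMap.finrank_range_of_inj hinj]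
    have : Module.finrank K ↥sl
        = Module.finrank K ↥(LinearMap.ker (Matrix.traceLinearMap (Fin r) K K)) := rfl
    rw [this, finrank_ker_trace hr, pow_two]
  · -- dim R
    have hrange : LinearMap.range (t ∘ₗ ext)
        = LinearMap.ker (Matrix.traceLinearMap (Fin r) K K) := by
      apply le_antisymm
      · rintro _ ⟨x, rfl⟩
        exact LinearMap.mem_ker.mpr (htr_t (ext x))
      · intro A hA
        refine ⟨f₀ A, ?_⟩
        rw [LinearMap.comp_apply, hext_f₀, ht_traceless A (LinearMap.mem_ker.mp hA)]
    have h2 := LinearMap.finrank_range_add_finrank_ker (t ∘ₗ ext)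
    rw [hrange, finrank_ker_trace hr] at h2
    have htot : Module.finrank K (Matrix (Fin n) (Fin m) K) = n * m := by
      simp [Module.finrank_matrix]
    rw [htot] at h2
    have hle : r * r ≤ n * m := Nat.mul_le_mul hrn hrm
    have h3 : (r * r - 1) + Module.finrank K ↥Rsub = n * m := h2
    have h1le : 1 ≤ r * r := Nat.mul_le_mul hr hr
    have hle2 : r * r ≤ m * n := Nat.mul_le_mul hrm hrn
    have h4 : Module.finrank K ↥Rsub = n * m - (r * r - 1) :=
      eq_tsub_of_add_eq (by rw [add_comm]; exact h3)
    rw [h4, pow_two, Nat.mul_comm n m]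
    omega

end

/-- Dimensions in the Levi–Malcev decomposition of
`g = (M_{n×m}(K), ⟦x,y⟧ = xby − ybx)` for `b` of rank `r ≥ 1`:
there is a decomposition `g = S ⊕ R` into a solvable ideal `R` and a Levi
subalgebra `S` isomorphic to `sl(r,K)` with
(a) `dim S = r² − 1`, (b) `dim R = mn − r² + 1`, and
(c) `dim Z(g) = 1` if `r = m = n` and `(m−r)(n−r)` otherwise. -/
theorem levi_malcev_dims {K : Type*} [Field K] [CharZero K] {m n r : ℕ}
    (b : Matrix (Fin m) (Fin n) K) (hrank : b.rank = r) (hr : 1 ≤ r)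
    (br : Matrix (Fin n) (Fin m) K → Matrix (Fin n) (Fin m) K → Matrix (Fin n) (Fin m) K)
    (hbr : ∀ x y, br x y = x * b * y - y * b * x) :
    ∃ Rsub Ssub Zsub : Submodule K (Matrix (Fin n) (Fin m) K),
      IsCompl Ssub Rsub ∧
      (∀ x y, y ∈ Rsub → br x y ∈ Rsub) ∧
      (∀ x₁ ∈ Rsub, ∀ x₂ ∈ Rsub, ∀ x₃ ∈ Rsub, ∀ x₄ ∈ Rsub,
        ∀ x₅ ∈ Rsub, ∀ x₆ ∈ Rsub, ∀ x₇ ∈ Rsub, ∀ x₈ ∈ Rsub,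
        br (br (br x₁ x₂) (br x₃ x₄)) (br (br x₅ x₆) (br x₇ x₈)) = 0) ∧
      (∃ f : ↥(LieAlgebra.SpecialLinear.sl (Fin r) K) →ₗ[K] Matrix (Fin n) (Fin m) K,
        Function.Injective f ∧ LinearMap.range f = Ssub ∧
        ∀ u v, f ⁅u, v⁆ = br (f u) (f v)) ∧
      Module.finrank K Ssub = r ^ 2 - 1 ∧
      Module.finrank K Rsub = m * n - r ^ 2 + 1 ∧
      (Zsub : Set (Matrix (Fin n) (Fin m) K))
          = {w | ∀ x : Matrix (Fin n) (Fin m) K, br x w = 0} ∧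
      Module.finrank K Zsub = (if r = m ∧ m = n then 1 else (m - r) * (n - r)) := by
  classical
  obtain ⟨p, p', q, q', hb, hp, hq⟩ := exists_rank_fact b hrank
  have hrm : r ≤ m := by rw [← hrank]; exact Matrix.rank_le_height b
  have hrn : r ≤ n := by rw [← hrank]; exact Matrix.rank_le_width b
  obtain ⟨Rsub, Ssub, hcompl, hideal, hsolv, hlevi, hdimS, hdimR⟩ :=
    levi_aux hr hrm hrn b p p' q q' hb hp hq br hbr
  by_cases hc : r = m ∧ m = n
  · obtain ⟨h1, h2⟩ := hc
    subst h1
    subst h2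
    have hpp' : p * p' = 1 := mul_eq_one_comm.mp hp
    have hq'q : q' * q = 1 := mul_eq_one_comm.mp hq
    set w₀ : Matrix (Fin r) (Fin r) K := q' * p' with hw₀
    have hbw : b * w₀ = 1 := by
      rw [hb, hw₀]
      calc p * q * (q' * p') = p * (q * q') * p' := by simp only [Matrix.mul_assoc]
        _ = 1 := by rw [hq, Matrix.mul_one, hpp']
    have hwb : w₀ * b = 1 := by
      rw [hb, hw₀]
      calc q' * p' * (p * q) = q' * (p' * p) * q := by simp only [Matrix.mul_assoc]
        _ = 1 := by rw [hp, Matrix.mul_one, hq'q]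
    refine ⟨Rsub, Ssub, Submodule.span K {w₀}, hcompl, hideal, hsolv, hlevi, hdimS, hdimR,
      ?_, ?_⟩
    · apply Set.ext; intro w
      simp only [SetLike.mem_coe, Submodule.mem_span_singleton, Set.mem_setOf_eq]
      constructor
      · rintro ⟨c, rfl⟩ x
        rw [hbr]
        have e1 : x * b * (c • w₀) = c • (x * (b * w₀)) := by
          rw [Matrix.mul_smul, Matrix.mul_assoc]
        have e2 : (c • w₀) * b * x = c • (w₀ * b * x) := by
          rw [Matrix.smul_mul, Matrix.smul_mul]
        rw [e1, e2, hbw, hwb, Matrix.mul_one, Matrix.one_mul, sub_self]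
      · intro hw
        have hcomm : ∀ x : Matrix (Fin r) (Fin r) K, x * (b * w) = (w * b) * x := by
          intro x
          have h3 := sub_eq_zero.mp ((hbr x w) ▸ hw x)
          calc x * (b * w) = x * b * w := by rw [Matrix.mul_assoc]
            _ = w * b * x := h3
        obtain ⟨c, hB, hC⟩ := scalar_pair (lt_of_lt_of_le Nat.zero_lt_one hr)
          (lt_of_lt_of_le Nat.zero_lt_one hr) hcomm
        refine ⟨c, ?_⟩
        calc c • w₀ = w₀ * (c • (1 : Matrix (Fin r) (Fin r) K)) := by
              rw [Matrix.mul_smul, Matrix.mul_one]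
          _ = w₀ * (b * w) := by rw [← hB]
          _ = (w₀ * b) * w := by rw [← Matrix.mul_assoc]
          _ = w := by rw [hwb, Matrix.one_mul]
    · have hw0 : w₀ ≠ 0 := by
        intro h0
        have h1 : q * w₀ * p = 1 := by
          rw [hw₀]
          calc q * (q' * p') * p = (q * q') * (p' * p) := by simp only [Matrix.mul_assoc]
            _ = 1 := by rw [hq, hp, Matrix.mul_one]
        rw [h0, Matrix.mul_zero, Matrix.zero_mul] at h1
        have h2 := congrArg (fun M => M ⟨0, hr⟩ ⟨0, hr⟩) h1
        simp [Matrix.one_apply] at h2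
      rw [if_pos ⟨rfl, rfl⟩]
      exact finrank_span_singleton hw0
  · set Zsub : Submodule K (Matrix (Fin n) (Fin m) K) :=
      LinearMap.ker (sandwichLin K q (1 : Matrix (Fin m) (Fin m) K)) ⊓
        LinearMap.ker (sandwichLin K (1 : Matrix (Fin n) (Fin n) K) p) with hZ
    have hmemZ : ∀ w, w ∈ Zsub ↔ q * w = 0 ∧ w * p = 0 := by
      intro w
      rw [hZ, Submodule.mem_inf, LinearMap.mem_ker, LinearMap.mem_ker, sandwichLin_apply,
        sandwichLin_apply, Matrix.mul_one, Matrix.one_mul]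
    have h0n : 0 < n := lt_of_lt_of_le hr hrn
    have h0m : 0 < m := lt_of_lt_of_le hr hrm
    refine ⟨Rsub, Ssub, Zsub, hcompl, hideal, hsolv, hlevi, hdimS, hdimR, ?_, ?_⟩
    · apply Set.ext; intro w
      simp only [SetLike.mem_coe, Set.mem_setOf_eq]
      rw [hmemZ w]
      constructor
      · rintro ⟨hqw, hwp⟩ x
        have hbw : b * w = 0 := by rw [hb, Matrix.mul_assoc, hqw, Matrix.mul_zero]
        have hwb : w * b = 0 := by rw [hb, ← Matrix.mul_assoc, hwp, Matrix.zero_mul]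
        rw [hbr, Matrix.mul_assoc x b w, hbw, Matrix.mul_zero, hwb, Matrix.zero_mul, sub_zero]
      · intro hw
        have hcomm : ∀ x : Matrix (Fin n) (Fin m) K, x * (b * w) = (w * b) * x := by
          intro x
          have h3 := sub_eq_zero.mp ((hbr x w) ▸ hw x)
          calc x * (b * w) = x * b * w := by rw [Matrix.mul_assoc]
            _ = w * b * x := h3
        obtain ⟨c, hB, hC⟩ := scalar_pair h0n h0m hcomm
        have hc0 : c = 0 := by
          by_contra hc0
          have hmn : r < m ∨ r < n := by
            by_contra hcon
            push_neg at hcon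
            exact hc ⟨le_antisymm hrm hcon.1, by omega⟩
          rcases hmn with h | h
          · have h1 : (b * w).rank = m := by
              rw [hB]
              have hu : IsUnit (c • (1 : Matrix (Fin m) (Fin m) K)) := by
                apply (Matrix.isUnit_iff_isUnit_det _).mpr
                rw [Matrix.det_smul, Matrix.det_one, mul_one]
                exact isUnit_iff_ne_zero.mpr (pow_ne_zero _ hc0)
              rw [Matrix.rank_of_isUnit _ hu, Fintype.card_fin]
            have h2 : (b * w).rank ≤ r := by rw [← hrank]; exact Matrix.rank_mul_le_left b w
            omega
          · have h1 : (w * b).rank = n := by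
              rw [hC]
              have hu : IsUnit (c • (1 : Matrix (Fin n) (Fin n) K)) := by
                apply (Matrix.isUnit_iff_isUnit_det _).mpr
                rw [Matrix.det_smul, Matrix.det_one, mul_one]
                exact isUnit_iff_ne_zero.mpr (pow_ne_zero _ hc0)
              rw [Matrix.rank_of_isUnit _ hu, Fintype.card_fin]
            have h2 : (w * b).rank ≤ r := by rw [← hrank]; exact Matrix.rank_mul_le_right w b
            omega
        rw [hc0, zero_smul] at hB hC
        constructor
        · calc q * w = (p' * p) * (q * w) := by rw [hp, Matrix.one_mul]
            _ = p' * (b * w) := by rw [hb]; simp only [Matrix.mul_assoc]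
            _ = 0 := by rw [hB, Matrix.mul_zero]
        · calc w * p = (w * p) * (q * q') := by rw [hq, Matrix.mul_one]
            _ = (w * b) * q' := by rw [hb]; simp only [Matrix.mul_assoc]
            _ = 0 := by rw [hC, Matrix.zero_mul]
    · set fm : Matrix (Fin n) (Fin n) K := 1 - q' * q with hfm
      set gm : Matrix (Fin m) (Fin m) K := 1 - p * p' with hgm
      have hqfm : q * fm = 0 := by
        rw [hfm, Matrix.mul_sub, Matrix.mul_one, ← Matrix.mul_assoc, hq, Matrix.one_mul,
          sub_self]
      have hgmp : gm * p = 0 := by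
        rw [hgm, Matrix.sub_mul, Matrix.one_mul, Matrix.mul_assoc, hp, Matrix.mul_one, sub_self]
      have hproj : LinearMap.IsProj Zsub (sandwichLin K fm gm) := by
        constructor
        · intro w
          rw [hmemZ]
          constructor
          · have e1 : q * (fm * w * gm) = (q * fm) * (w * gm) := by
              simp only [Matrix.mul_assoc]
            rw [sandwichLin_apply, e1, hqfm, Matrix.zero_mul]
          · have e1 : (fm * w * gm) * p = (fm * w) * (gm * p) := by
              simp only [Matrix.mul_assoc]
            rw [sandwichLin_apply, e1, hgmp, Matrix.mul_zero]
        · intro w hw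
          obtain ⟨hqw, hwp⟩ := (hmemZ w).mp hw
          rw [sandwichLin_apply, hfm, hgm]
          calc (1 - q' * q) * w * (1 - p * p')
              = (w - q' * (q * w)) * (1 - p * p') := by
                rw [Matrix.sub_mul, Matrix.one_mul, Matrix.mul_assoc]
            _ = w * (1 - p * p') := by rw [hqw, Matrix.mul_zero, sub_zero]
            _ = w - (w * p) * p' := by rw [Matrix.mul_sub, Matrix.mul_one, Matrix.mul_assoc]
            _ = w := by rw [hwp, Matrix.zero_mul, sub_zero]
      have htr := hproj.trace
      rw [trace_sandwich] at htr
      have htf : Matrix.trace fm = ((n - r : ℕ) : K) := by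
        rw [hfm, Matrix.trace_sub, Matrix.trace_one, Matrix.trace_mul_comm, hq,
          Matrix.trace_one, Fintype.card_fin, Fintype.card_fin, Nat.cast_sub hrn]
      have htg : Matrix.trace gm = ((m - r : ℕ) : K) := by
        rw [hgm, Matrix.trace_sub, Matrix.trace_one, Matrix.trace_mul_comm, hp,
          Matrix.trace_one, Fintype.card_fin, Fintype.card_fin, Nat.cast_sub hrm]
      rw [htf, htg] at htr
      have hcast : ((Module.finrank K ↥Zsub : ℕ) : K) = (((n - r) * (m - r) : ℕ) : K) := by
        rw [← htr, Nat.cast_mul]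
      have hfin : Module.finrank K ↥Zsub = (n - r) * (m - r) := Nat.cast_injective hcast
      rw [if_neg hc, hfin, Nat.mul_comm]
end
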